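/- Let n ≥ 2 and let G = BS(1,n) = ⟨a, t ∣ t a t⁻¹ = aⁿ⟩ be the Baumslag–Solitar group, with generating set S = {a, t}. Then the kernel of the natural action of G on every asymptotic cone is trivial: for every g ∈ G with g ≠ 1, every nonprincipal ultrafilter ω on ℕ, and every unbounded nondecreasing sequence (d_k) of positive real numbers, there exists a sequence (x_k) in G such that (‖x_k‖_S/d_k) is bounded and the sequence ‖x_k⁻¹ g x_k‖_S / d_k does not converge to 0 along ω. -/

import Mathlib

/-!
`BS(1,n)` acts faithfully on `ℝ` by affine maps, `a` as `q ↦ q + 1` and `t` as `q ↦ n q`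
(faithfulness comes from the normal form `t⁻ⁱ aʲ tᵏ`). A generator or its inverse enlarges
`|q| + 1` at most by the factor `n²`, so an element moving `0` to `p` has word length at least
`log_{n²} |p|`. Given `g ≠ 1`, conjugating by `1` or by `a` gives `h = y⁻¹ g y` moving `0` to some
`β ≠ 0`. With `L = ⌊d_k⌋`, the element `x_k = y t⁻ᴸ` has length at most `d_k + 1`, while
`x_k⁻¹ g x_k = tᴸ h t⁻ᴸ` moves `0` to `nᴸ β`; its length is therefore at least `L/2` minus a
constant, and the ratio to `d_k` stays above `1/4` along every nonprincipal ultrafilter.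
-/

open Filter

noncomputable def wordLength {G : Type*} [Group G] (S : Set G) (g : G) : ℕ :=
  sInf {n | ∃ l : List G, (∀ x ∈ l, x ∈ S ∨ x⁻¹ ∈ S) ∧ l.length = n ∧ l.prod = g}

/-- The defining relation of the Baumslag–Solitar group `BS(1,n)`: with `a` the generator
`0` and `t` the generator `1` of the free group on two letters, the relator is
`t a t⁻¹ a⁻ⁿ`. -/
def BSrel (n : ℕ) : Set (FreeGroup (Fin 2)) :=
  {FreeGroup.of 1 * FreeGroup.of 0 * (FreeGroup.of 1)⁻¹ * (FreeGroup.of 0 ^ n)⁻¹}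

def BS (n : ℕ) : Type := PresentedGroup (BSrel n)

instance (n : ℕ) : Group (BS n) := by unfold BS; infer_instance

open Topology

section WordLength

variable {G : Type*} [Group G] {S : Set G}

theorem wordLength_prod_le_length {l : List G} (hl : ∀ x ∈ l, x ∈ S ∨ x⁻¹ ∈ S) :
    wordLength S l.prod ≤ l.length :=
  Nat.sInf_le ⟨l, hl, rfl, rfl⟩

theorem exists_list_length_eq_wordLength (hS : Subgroup.closure S = ⊤) (g : G) :
    ∃ l : List G, (∀ x ∈ l, x ∈ S ∨ x⁻¹ ∈ S) ∧ l.length = wordLength S g ∧ l.prod = g := by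
  refine Nat.sInf_mem (s := {m | ∃ l : List G, (∀ x ∈ l, x ∈ S ∨ x⁻¹ ∈ S) ∧ l.length = m ∧
    l.prod = g}) ?_
  have hg : g ∈ Submonoid.closure (S ∪ S⁻¹) := by
    rw [← Subgroup.closure_toSubmonoid, hS]
    trivial
  obtain ⟨l, hl, rfl⟩ := Submonoid.exists_list_of_mem_closure hg
  exact ⟨l.length, l, hl, rfl, rfl⟩

theorem wordLength_pow_le {s : G} (hs : s ∈ S ∨ s⁻¹ ∈ S) (m : ℕ) : wordLength S (s ^ m) ≤ m := by
  simpa using wordLength_prod_le_length (S := S) (l := List.replicate m s)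
    (fun x hx => (List.eq_of_mem_replicate hx) ▸ hs)

theorem wordLength_mul_le (hS : Subgroup.closure S = ⊤) (g h : G) :
    wordLength S (g * h) ≤ wordLength S g + wordLength S h := by
  obtain ⟨l, hl, hl_len, rfl⟩ := exists_list_length_eq_wordLength hS g
  obtain ⟨m, hm, hm_len, rfl⟩ := exists_list_length_eq_wordLength hS h
  rw [← hl_len, ← hm_len, ← List.length_append, ← List.prod_append]
  exact wordLength_prod_le_length fun x hx => (List.mem_append.mp hx).elim (hl x) (hm x)

theorem le_pow_wordLength_mul (hS : Subgroup.closure S = ⊤) {N : G → ℝ} {c : ℝ} (hc : 0 ≤ c)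
    (hN : ∀ s, s ∈ S ∨ s⁻¹ ∈ S → ∀ h, N (s * h) ≤ c * N h) (g : G) :
    N g ≤ c ^ wordLength S g * N 1 := by
  obtain ⟨l, hl, hl_len, rfl⟩ := exists_list_length_eq_wordLength hS g
  rw [← hl_len]
  clear hl_len
  induction l with
  | nil => simp
  | cons s l ih =>
    rw [List.prod_cons, List.length_cons, pow_succ', mul_assoc]
    exact (hN s (hl s List.mem_cons_self) _).trans
      (mul_le_mul_of_nonneg_left (ih fun x hx => hl x (List.mem_cons_of_mem s hx)) hc)

end WordLength

theorem Ultrafilter.le_atTop_of_forall_infinite {ω : Ultrafilter ℕ}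
    (hω : ∀ A ∈ ω, A.Infinite) : (ω : Filter ℕ) ≤ atTop := by
  rw [← Nat.cofinite_eq_atTop, le_cofinite_iff_compl_singleton_mem]
  intro k
  exact (ω.mem_or_compl_mem {k}).resolve_left fun hk => hω _ hk (Set.finite_singleton k)

theorem exists_forall_div_le_of_le_add {u d : ℕ → ℝ} (hd_pos : ∀ k, 0 < d k)
    (hd_mono : Monotone d) {B : ℝ} (hB : 0 ≤ B) (h : ∀ k, u k ≤ d k + B) :
    ∃ C, ∀ k, u k / d k ≤ C := by
  refine ⟨1 + B / d 0, fun k => ?_⟩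
  calc u k / d k ≤ (d k + B) / d k := div_le_div_of_nonneg_right (h k) (hd_pos k).le
    _ = 1 + B / d k := by rw [add_div, div_self (hd_pos k).ne']
    _ ≤ 1 + B / d 0 := by
      gcongr
      · exact hd_pos 0
      · exact hd_mono (Nat.zero_le k)

theorem not_tendsto_div_nhds_zero_of_le_mul_add {α : Type*} {l : Filter α} [l.NeBot]
    {u d : α → ℝ} (hd : Tendsto d l atTop) {c K : ℝ} (hc : 0 < c)
    (h : ∀ k, d k ≤ c * u k + K) : ¬ Tendsto (fun k => u k / d k) l (𝓝 0) := by
  have hlarge : ∀ᶠ k in l, 1 / (2 * c) ≤ u k / d k := by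
    filter_upwards [hd.eventually_ge_atTop (max (2 * K) 1)] with k hk
    have hdk : 0 < d k := zero_lt_one.trans_le (le_of_max_le_right hk)
    rw [div_le_div_iff₀ (by positivity) hdk]
    linarith [h k, le_of_max_le_left hk]
  intro hT
  obtain ⟨k, hk_small, hk_large⟩ :=
    ((hT.eventually (gt_mem_nhds (by positivity : (0 : ℝ) < 1 / (2 * c)))).and hlarge).exists
  exact hk_small.not_ge hk_large

theorem pow_mul_zpow_mul_inv_pow_of_mul_mul_inv_eq {G : Type*} [Group G] {a t : G} {m : ℤ}
    (h : t * a * t⁻¹ = a ^ m) (i : ℕ) (j : ℤ) : t ^ i * a ^ j * (t ^ i)⁻¹ = a ^ (m ^ i * j) := by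
  induction i with
  | zero => simp
  | succ i ih =>
    calc t ^ (i + 1) * a ^ j * (t ^ (i + 1))⁻¹ = t * (t ^ i * a ^ j * (t ^ i)⁻¹) * t⁻¹ := by
          group
      _ = a ^ (m ^ (i + 1) * j) := by
          rw [ih, ← conj_zpow, h, ← zpow_mul, pow_succ']
          ring_nf

namespace BS

def a (n : ℕ) : BS n := PresentedGroup.of 0

def t (n : ℕ) : BS n := PresentedGroup.of 1

noncomputable def toAffine (n : ℕ) [NeZero n] : BS n →* Equiv.Perm ℝ :=
  PresentedGroup.toGroup
    (f := ![Equiv.addRight 1, MulAction.toPermHom ℝˣ ℝ (Units.mk0 (n : ℝ) (NeZero.ne _))]) (by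
      have : (n : ℝ) ≠ 0 := NeZero.ne _
      rintro _ rfl
      ext q
      simp [Units.smul_def]
      field_simp)

variable {n : ℕ}

theorem t_mul_a_mul_t_inv : t n * a n * (t n)⁻¹ = a n ^ (n : ℤ) := by
  rw [zpow_natCast, ← mul_inv_eq_one]
  exact PresentedGroup.one_of_mem rfl

theorem closure_a_t : Subgroup.closure {a n, t n} = ⊤ := by
  have h : Set.range (PresentedGroup.of (rels := BSrel n)) = {a n, t n} := by
    ext
    simp [Fin.exists_fin_two, a, t, eq_comm]
    rfl
  exact h ▸ PresentedGroup.closure_range_of (BSrel n)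

theorem exists_eq_inv_t_pow_mul_a_zpow_mul_t_pow (g : BS n) :
    ∃ (i k : ℕ) (j : ℤ), g = (t n ^ i)⁻¹ * a n ^ j * t n ^ k := by
  have conj := pow_mul_zpow_mul_inv_pow_of_mul_mul_inv_eq (t_mul_a_mul_t_inv (n := n))
  have hg : g ∈ Subgroup.closure {a n, t n} := closure_a_t ▸ Subgroup.mem_top g
  induction hg using Subgroup.closure_induction_left with
  | one => exact ⟨0, 0, 0, by simp⟩
  | mul_left x hx y _ ih =>
    obtain ⟨i, k, j, rfl⟩ := ih
    rcases hx with rfl | rfl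
    · refine ⟨i, k, n ^ i * 1 + j, ?_⟩
      rw [zpow_add, ← conj]
      group
    · cases i with
      | zero => exact ⟨0, k + 1, n ^ 1 * j, by rw [← conj]; group⟩
      | succ i => exact ⟨i, k, j, by group⟩
  | inv_mul_cancel x hx y _ ih =>
    obtain ⟨i, k, j, rfl⟩ := ih
    rcases hx with rfl | rfl
    · refine ⟨i, k, n ^ i * (-1) + j, ?_⟩
      rw [zpow_add, ← conj]
      group
    · exact ⟨i + 1, k, j, by group⟩

section Affine

variable [NeZero n]

theorem toAffine_a : toAffine n (a n) = Equiv.addRight 1 :=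
  PresentedGroup.toGroup.of _

theorem toAffine_t :
    toAffine n (t n) = MulAction.toPermHom ℝˣ ℝ (Units.mk0 (n : ℝ) (NeZero.ne _)) :=
  PresentedGroup.toGroup.of _

theorem toAffine_a_apply (q : ℝ) : toAffine n (a n) q = q + 1 := by
  simp [toAffine_a]

theorem toAffine_a_inv_apply (q : ℝ) : toAffine n (a n)⁻¹ q = q - 1 := by
  simp [toAffine_a, sub_eq_add_neg]

theorem toAffine_a_zpow_apply (j : ℤ) (q : ℝ) : toAffine n (a n ^ j) q = q + j := by
  rw [map_zpow, toAffine_a, Equiv.zsmul_addRight]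
  simp

theorem toAffine_t_pow_apply (k : ℕ) (q : ℝ) : toAffine n (t n ^ k) q = n ^ k * q := by
  rw [map_pow, toAffine_t, ← map_pow]
  simp [Units.smul_def]

theorem toAffine_t_pow_inv_apply (k : ℕ) (q : ℝ) : toAffine n (t n ^ k)⁻¹ q = q / n ^ k := by
  have : (n : ℝ) ≠ 0 := NeZero.ne _
  rw [map_inv, Equiv.Perm.inv_eq_iff_eq, toAffine_t_pow_apply]
  field_simp

theorem toAffine_inv_t_pow_mul_a_zpow_mul_t_pow_apply (i k : ℕ) (j : ℤ) (q : ℝ) :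
    toAffine n ((t n ^ i)⁻¹ * a n ^ j * t n ^ k) q = (n ^ k * q + j) / n ^ i := by
  simp only [map_mul, Equiv.Perm.mul_apply, toAffine_t_pow_apply, toAffine_a_zpow_apply,
    toAffine_t_pow_inv_apply]

theorem eq_one_of_toAffine_apply_zero_of_apply_one (hn : 2 ≤ n) {g : BS n}
    (h0 : toAffine n g 0 = 0) (h1 : toAffine n g 1 = 1) : g = 1 := by
  obtain ⟨i, k, j, rfl⟩ := exists_eq_inv_t_pow_mul_a_zpow_mul_t_pow g
  have hni : (n : ℝ) ^ i ≠ 0 := by positivity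
  rw [toAffine_inv_t_pow_mul_a_zpow_mul_t_pow_apply] at h0 h1
  obtain rfl : j = 0 := by simpa [hni] using h0
  obtain rfl : k = i := by
    refine pow_right_injective₀ (a := (n : ℝ)) (by positivity) ?_ ?_
    · exact_mod_cast (show n ≠ 1 by omega)
    · simpa [div_eq_one_iff_eq hni] using h1
  group

theorem abs_toAffine_apply_add_one_le (hn : 2 ≤ n) {s : BS n}
    (hs : s ∈ ({a n, t n} : Set (BS n)) ∨ s⁻¹ ∈ ({a n, t n} : Set (BS n))) (q : ℝ) :
    |toAffine n s q| + 1 ≤ n ^ 2 * (|q| + 1) := by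
  have hn2 : (2 : ℝ) ≤ n := by exact_mod_cast hn
  have hq := abs_nonneg q
  have hscale : ∀ c : ℝ, c ≤ n ^ 2 → c * (|q| + 1) ≤ n ^ 2 * (|q| + 1) := fun c hc =>
    mul_le_mul_of_nonneg_right hc (by positivity)
  rcases hs with (rfl | rfl) | (hs | hs)
  · rw [toAffine_a_apply]
    linarith [abs_add_le q 1, abs_one (α := ℝ), hscale 2 (by nlinarith)]
  · have h := toAffine_t_pow_apply (n := n) 1 q
    rw [pow_one, pow_one] at h
    rw [h, abs_mul, Nat.abs_cast]
    linarith [hscale n (by nlinarith)]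
  · obtain rfl : s = (a n)⁻¹ := by rw [← hs, inv_inv]
    rw [toAffine_a_inv_apply]
    linarith [abs_sub q 1, abs_one (α := ℝ), hscale 2 (by nlinarith)]
  · obtain rfl : s = (t n ^ 1)⁻¹ := by rw [pow_one, ← hs, inv_inv]
    rw [toAffine_t_pow_inv_apply, pow_one, abs_div, Nat.abs_cast]
    have : |q| / n ≤ |q| := div_le_self hq (by linarith)
    linarith [hscale 1 (by nlinarith)]

theorem abs_toAffine_apply_zero_add_one_le (hn : 2 ≤ n) (g : BS n) :
    |toAffine n g 0| + 1 ≤ ((n : ℝ) ^ 2) ^ wordLength {a n, t n} g := by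
  simpa using le_pow_wordLength_mul closure_a_t (N := fun g => |toAffine n g 0| + 1)
    (by positivity) (fun s hs h => by
      simpa only [map_mul, Equiv.Perm.mul_apply] using abs_toAffine_apply_add_one_le hn hs _) g

theorem toAffine_conj_t_pow_apply_zero (h : BS n) (L : ℕ) :
    toAffine n (t n ^ L * h * (t n ^ L)⁻¹) 0 = n ^ L * toAffine n h 0 := by
  simp only [map_mul, Equiv.Perm.mul_apply, toAffine_t_pow_inv_apply, zero_div,
    toAffine_t_pow_apply]

theorem exists_wordLength_le_one_toAffine_conj_apply_zero_ne_zero (hn : 2 ≤ n) {g : BS n}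
    (hg : g ≠ 1) : ∃ y : BS n, wordLength {a n, t n} y ≤ 1 ∧ toAffine n (y⁻¹ * g * y) 0 ≠ 0 := by
  by_cases h0 : toAffine n g 0 = 0
  · refine ⟨a n, by simpa using wordLength_pow_le (S := {a n, t n}) (Or.inl (Or.inl rfl)) 1,
      fun h1 => hg (eq_one_of_toAffine_apply_zero_of_apply_one hn h0 ?_)⟩
    simp only [map_mul, Equiv.Perm.mul_apply, toAffine_a_apply, toAffine_a_inv_apply,
      zero_add] at h1
    linarith
  · exact ⟨1, (wordLength_prod_le_length (l := []) (by simp)).trans zero_le_one, by simpa using h0⟩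

theorem exists_le_two_mul_wordLength_conj_t_pow (hn : 2 ≤ n) {h : BS n}
    (hh : toAffine n h 0 ≠ 0) :
    ∃ K : ℕ, ∀ L : ℕ, L ≤ 2 * wordLength {a n, t n} (t n ^ L * h * (t n ^ L)⁻¹) + K := by
  have hn1 : (1 : ℝ) < n := by exact_mod_cast hn
  have hβ : 0 < |toAffine n h 0| := abs_pos.mpr hh
  obtain ⟨K, hK⟩ := pow_unbounded_of_one_lt (|toAffine n h 0|)⁻¹ hn1
  refine ⟨K, fun L => (pow_le_pow_iff_right₀ hn1).mp ?_⟩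
  have hgrowth := abs_toAffine_apply_zero_add_one_le hn (t n ^ L * h * (t n ^ L)⁻¹)
  rw [toAffine_conj_t_pow_apply_zero, abs_mul, abs_of_pos (by positivity)] at hgrowth
  have hKβ : 1 ≤ |toAffine n h 0| * n ^ K := by
    calc (1 : ℝ) = |toAffine n h 0| * |toAffine n h 0|⁻¹ := (mul_inv_cancel₀ hβ.ne').symm
      _ ≤ |toAffine n h 0| * n ^ K := by gcongr
  calc (n : ℝ) ^ L ≤ n ^ L * |toAffine n h 0| * n ^ K := by
        rw [mul_assoc]; exact le_mul_of_one_le_right (by positivity) hKβ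
    _ ≤ ((n : ℝ) ^ 2) ^ wordLength {a n, t n} (t n ^ L * h * (t n ^ L)⁻¹) * n ^ K := by
        gcongr; linarith
    _ = n ^ (2 * wordLength {a n, t n} (t n ^ L * h * (t n ^ L)⁻¹) + K) := by
        rw [pow_add, pow_mul]

end Affine

end BS

/-- The kernel of the natural action of `BS(1,n)` (`n ≥ 2`) on every asymptotic cone is
trivial: every `g ≠ 1` is moved away from some admissible sequence. -/
theorem coneKernel_trivial_BS (n : ℕ) (hn : 2 ≤ n)
    (a t : BS n) (ha : a = PresentedGroup.of 0) (ht : t = PresentedGroup.of 1)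
    (g : BS n) (hg : g ≠ 1)
    (ω : Ultrafilter ℕ) (hω : ∀ A ∈ ω, A.Infinite)
    (d : ℕ → ℝ) (hd_pos : ∀ k, 0 < d k) (hd_mono : Monotone d)
    (hd_unbdd : ∀ B : ℝ, ∃ k, B < d k) :
    ∃ x : ℕ → BS n,
      (∃ B : ℝ, ∀ k, (wordLength {a, t} (x k) : ℝ) / d k ≤ B) ∧
      ¬ Tendsto (fun k => (wordLength {a, t} ((x k)⁻¹ * g * x k) : ℝ) / d k)
          (ω : Filter ℕ) (nhds 0) := by
  obtain rfl : a = BS.a n := ha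
  obtain rfl : t = BS.t n := ht
  have : NeZero n := ⟨by omega⟩
  obtain ⟨y, hy, hβ⟩ := BS.exists_wordLength_le_one_toAffine_conj_apply_zero_ne_zero hn hg
  obtain ⟨K, hK⟩ := BS.exists_le_two_mul_wordLength_conj_t_pow hn hβ
  set x : ℕ → BS n := fun k => y * (BS.t n ^ ⌊d k⌋₊)⁻¹
  have hx : ∀ k, (wordLength {BS.a n, BS.t n} (x k) : ℝ) ≤ d k + 1 := fun k => by
    have hlen := (wordLength_mul_le BS.closure_a_t y _).trans
      (add_le_add hy (inv_pow (BS.t n) ⌊d k⌋₊ ▸ wordLength_pow_le (Or.inr (by simp)) _))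
    have hfloor := Nat.floor_le (hd_pos k).le
    have hlen' : (wordLength {BS.a n, BS.t n} (x k) : ℝ) ≤ 1 + ⌊d k⌋₊ := by exact_mod_cast hlen
    linarith
  have hconj : ∀ k, d k ≤ 2 * (wordLength {BS.a n, BS.t n} ((x k)⁻¹ * g * x k) : ℝ) + (K + 1) :=
    fun k => by
      have hw : (x k)⁻¹ * g * x k = BS.t n ^ ⌊d k⌋₊ * (y⁻¹ * g * y) * (BS.t n ^ ⌊d k⌋₊)⁻¹ := by
        simp only [x]
        group
      have hfloor := Nat.lt_floor_add_one (d k)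
      have hL : (⌊d k⌋₊ : ℝ) ≤ 2 * (wordLength {BS.a n, BS.t n} ((x k)⁻¹ * g * x k) : ℝ) + K := by
        exact_mod_cast hw ▸ hK ⌊d k⌋₊
      linarith
  have hd : Tendsto d ω atTop :=
    (tendsto_atTop_atTop_of_monotone hd_mono fun B => (hd_unbdd B).imp fun _ => le_of_lt).mono_left
      (Ultrafilter.le_atTop_of_forall_infinite hω)
  exact ⟨x, exists_forall_div_le_of_le_add hd_pos hd_mono zero_le_one hx,
    not_tendsto_div_nhds_zero_of_le_mul_add hd two_pos hconj⟩
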